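/- arXiv:1607.04604 — 3 statements merged into one kernel-verified Lean document; each statement's English description precedes it below -/
import Mathlib

section
/- For every natural number n and every positive natural number m, (sum over i from m to 2m-1 of floor((n+i)/(2m))) minus (sum over i from 0 to m-1 of floor((n+i)/(2m))) equals 2m * Zigzag(n/(2m)). -/
/-!
Write `n = 2m·q + r` with `0 ≤ r < 2m`. For `0 ≤ i < 2m` the term `⌊(n + i)/2m⌋` is `q`, plus one
exactly when `i ≥ 2m - r`, so a partial sum over `i < k` is `k·q + (k + r - 2m)⁺`. Hence the
difference of the two half sums is `r - 2(r - m)⁺ = min r (2m - r)`, and this is `2m · Zigzag (n/2m)`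
because `Zigzag x = min (fract x) (1 - fract x)` and `fract (n/2m) = r/2m`.
-/

def Zigzag (x : ℚ) : ℚ := min (x - ⌊x⌋) (⌈x⌉ - x)

theorem zigzag_eq_min_fract (x : ℚ) : Zigzag x = min (Int.fract x) (1 - Int.fract x) := by
  rcases Int.fract_eq_zero_or_add_one_sub_ceil x with h | h
  · have hx : x = ⌊x⌋ := by rw [Int.fract, sub_eq_zero] at h; exact h
    rw [h, Zigzag, hx, Int.floor_intCast, Int.ceil_intCast]
    simp
  · rw [Zigzag, Int.self_sub_floor]
    congr 1
    rw [h]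
    ring

theorem natCast_mul_zigzag_natCast_div (M n : ℕ) :
    (M : ℚ) * Zigzag (n / M) = (min (n % M) (M - n % M) : ℕ) := by
  rcases M.eq_zero_or_pos with rfl | hM
  · simp
  rw [zigzag_eq_min_fract, Int.fract_div_natCast_eq_div_natCast_mod,
    mul_min_of_nonneg _ _ (Nat.cast_nonneg M), Nat.cast_min, Nat.cast_sub (Nat.mod_lt n hM).le]
  congr 1 <;> field_simp

theorem sum_range_add_div {M : ℕ} (hM : 0 < M) (n : ℕ) {k : ℕ} (hk : k ≤ M) :
    ∑ i ∈ Finset.range k, (n + i) / M = k * (n / M) + (k + n % M - M) := by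
  induction k with
  | zero => simp [Nat.sub_eq_zero_of_le (Nat.mod_lt n hM).le]
  | succ k ih =>
    have hkM : k < M := hk
    rw [Finset.sum_range_succ, ih hkM.le, Nat.add_div hM, Nat.div_eq_of_lt hkM,
      Nat.mod_eq_of_lt hkM, add_one_mul]
    split_ifs <;> omega

theorem sum_Ico_add_div_two_mul (n m : ℕ) :
    ∑ i ∈ Finset.Ico m (2 * m), (n + i) / (2 * m)
      = ∑ i ∈ Finset.range m, (n + i) / (2 * m) + min (n % (2 * m)) (2 * m - n % (2 * m)) := by
  rcases m.eq_zero_or_pos with rfl | hm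
  · simp
  have hM : 0 < 2 * m := by omega
  have hlow := sum_range_add_div hM n (by omega : m ≤ 2 * m)
  have hall := sum_range_add_div hM n le_rfl
  rw [← Finset.sum_range_add_sum_Ico _ (by omega : m ≤ 2 * m)] at hall
  have hq : 2 * m * (n / (2 * m)) = m * (n / (2 * m)) + m * (n / (2 * m)) := by ring
  have hr := Nat.mod_lt n hM
  omega

theorem sum_floor_diff_eq_zigzag_general (n m : ℕ) :
    ((∑ i ∈ Finset.Ico m (2 * m), ⌊((n : ℚ) + i) / (2 * m)⌋
      - ∑ i ∈ Finset.range m, ⌊((n : ℚ) + i) / (2 * m)⌋ : ℤ) : ℚ)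
      = 2 * m * Zigzag ((n : ℚ) / (2 * m)) := by
  have hfloor (i : ℕ) : ⌊((n : ℚ) + i) / (2 * m)⌋ = ((n + i) / (2 * m) : ℕ) := by
    exact_mod_cast Rat.floor_natCast_div_natCast (n + i) (2 * m)
  simp only [hfloor, ← Nat.cast_sum, sum_Ico_add_div_two_mul, Nat.cast_add, add_sub_cancel_left]
  have hzigzag := natCast_mul_zigzag_natCast_div (2 * m) n
  push_cast at hzigzag ⊢
  exact hzigzag.symm

theorem sum_floor_diff_eq_zigzag (n m : ℕ) (hm : 0 < m) :
    ((∑ i ∈ Finset.Ico m (2 * m), ⌊((n : ℚ) + i) / (2 * m)⌋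
      - ∑ i ∈ Finset.range m, ⌊((n : ℚ) + i) / (2 * m)⌋ : ℤ) : ℚ)
      = 2 * m * Zigzag ((n : ℚ) / (2 * m)) :=
  sum_floor_diff_eq_zigzag_general n m
end

section
/- Let B : N -> N satisfy B(0) = 0, B(1) = 0, and B(n) = floor(n/2) + B(floor(n/2)) + B(ceil(n/2)) for n >= 2. Then for every positive natural number n, B(n) = (n/2)*(floor(log2 n) + 1) - sum over k from 0 to floor(log2 n) of 2^k * Zigzag(n/2^(k+1)), as an equality of rational numbers. -/
/-!
Write `zigzagFormula n M` for the right-hand side with `⌊log₂ n⌋` replaced by a depth `M`.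
Since `Zigzag x = x` for `0 ≤ x ≤ 1 / 2`, the two terms added in passing from depth `M` to
`M + 1` cancel as soon as `n ≤ 2 ^ (M + 1)`, so it suffices to show that `zigzagFormula n M`,
for `n ≤ 2 ^ M`, obeys the recurrence of `B`. Splitting off the `k = 0` term does this: for
even `n = 2m` the remaining terms are twice those of `m`, and for odd `n = 2m + 1` each
remaining term at `(2m + 1) / 2 ^ (k + 2)` is the average of the terms at `m / 2 ^ (k + 1)` and
`(m + 1) / 2 ^ (k + 1)`.
-/

lemma Int.toNat_ceil_natCast_div_two (n : ℕ) : ⌈(n : ℚ) / 2⌉.toNat = (n + 1) / 2 := by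
  have h := Rat.ceil_natCast_div_natCast n 2
  push_cast at h
  rw [h]
  omega

lemma zigzag_add_intCast (x : ℚ) (z : ℤ) : Zigzag (x + z) = Zigzag x := by
  simp only [Zigzag, Int.floor_add_intCast, Int.ceil_add_intCast, Int.cast_add]
  ring_nf

lemma zigzag_neg (x : ℚ) : Zigzag (-x) = Zigzag x := by
  simp only [Zigzag, Int.floor_neg, Int.ceil_neg, Int.cast_neg, min_comm]
  ring_nf

lemma zigzag_eq_self_of_le_half {x : ℚ} (h0 : 0 ≤ x) (h : x ≤ 1 / 2) : Zigzag x = x := by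
  rcases h0.eq_or_lt with rfl | hpos
  · simp [Zigzag]
  have hfloor : ⌊x⌋ = 0 := Int.floor_eq_zero_iff.mpr ⟨h0, by linarith⟩
  have hceil : ⌈x⌉ = 1 :=
    Int.ceil_eq_iff.mpr ⟨by push_cast; linarith, by push_cast; linarith⟩
  simp only [Zigzag, hfloor, hceil, Int.cast_zero, Int.cast_one, sub_zero]
  exact min_eq_left (by linarith)

lemma zigzag_eq_one_sub_of_half_le {x : ℚ} (h : 1 / 2 ≤ x) (h1 : x ≤ 1) :
    Zigzag x = 1 - x := by
  have hsymm : Zigzag x = Zigzag (1 - x) := by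
    rw [sub_eq_neg_add, ← Int.cast_one, zigzag_add_intCast, zigzag_neg]
  rw [hsymm, zigzag_eq_self_of_le_half (by linarith) (by linarith)]

lemma zigzag_two_mul_midpoint_of_le {r e : ℚ} (hr0 : 0 ≤ r) (hr : r + 1 ≤ 2 * e)
    (hhalf : r + 1 ≤ e ∨ e ≤ r) :
    2 * Zigzag ((2 * r + 1) / (4 * e)) = Zigzag (r / (2 * e)) + Zigzag ((r + 1) / (2 * e)) := by
  have he : 0 < e := by linarith
  rcases hhalf with hlow | hhigh
  · rw [zigzag_eq_self_of_le_half, zigzag_eq_self_of_le_half, zigzag_eq_self_of_le_half]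
    · field_simp; ring
    all_goals first
      | positivity
      | (rw [div_le_iff₀ (by positivity)]; linarith)
  · rw [zigzag_eq_one_sub_of_half_le, zigzag_eq_one_sub_of_half_le,
      zigzag_eq_one_sub_of_half_le]
    · field_simp; ring
    all_goals first
      | (rw [le_div_iff₀ (by positivity)]; linarith)
      | (rw [div_le_one (by positivity)]; linarith)

/-- `Zigzag` is affine between consecutive multiples of `1 / d` when `d` is even, since no
half-integer lies strictly between them. -/
lemma zigzag_two_mul_midpoint (m : ℤ) {d : ℕ} (hd : Even d) (hd0 : 0 < d) :
    2 * Zigzag ((2 * m + 1) / (2 * d)) = Zigzag (m / d) + Zigzag ((m + 1) / d) := by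
  obtain ⟨e, rfl⟩ := hd
  obtain ⟨q, r, hr0, hr, rfl⟩ : ∃ q r : ℤ, 0 ≤ r ∧ r < 2 * e ∧ m = 2 * e * q + r :=
    ⟨m / (2 * e), m % (2 * e), Int.emod_nonneg _ (by omega), Int.emod_lt_of_pos _ (by omega),
      (Int.mul_ediv_add_emod m _).symm⟩
  have hshift : ∀ a b : ℚ, 0 < b → (b * q + a) / b = a / b + q := fun a b hb => by
    field_simp; ring
  have he : (0 : ℚ) < e := by exact_mod_cast (show 0 < e by omega)
  push_cast
  rw [show (e : ℚ) + e = 2 * e by ring,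
    show 2 * (2 * e * q + r) + 1 = 2 * (2 * e) * (q : ℚ) + (2 * r + 1) by ring,
    show 2 * e * q + r + 1 = 2 * e * (q : ℚ) + (r + 1) by ring,
    hshift _ _ (by positivity), hshift _ _ (by positivity), hshift _ _ (by positivity),
    zigzag_add_intCast, zigzag_add_intCast, zigzag_add_intCast,
    show 2 * (2 * (e : ℚ)) = 4 * e by ring]
  refine zigzag_two_mul_midpoint_of_le (by exact_mod_cast hr0) ?_ ?_
  · exact_mod_cast (show r + 1 ≤ 2 * e by omega)
  · rcases lt_or_ge r e with hlow | hhigh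
    · left; exact_mod_cast hlow
    · right; exact_mod_cast hhigh

def zigzagFormula (n M : ℕ) : ℚ :=
  (n : ℚ) / 2 * (M + 1) - ∑ k ∈ Finset.range (M + 1), 2 ^ k * Zigzag ((n : ℚ) / 2 ^ (k + 1))

lemma zigzagFormula_succ_of_le {n M : ℕ} (h : n ≤ 2 ^ (M + 1)) :
    zigzagFormula n (M + 1) = zigzagFormula n M := by
  have hn : (n : ℚ) ≤ 2 ^ (M + 1) := by exact_mod_cast h
  have hlast : Zigzag ((n : ℚ) / 2 ^ (M + 1 + 1)) = n / 2 ^ (M + 1 + 1) := by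
    refine zigzag_eq_self_of_le_half (by positivity) ?_
    rw [div_le_iff₀ (by positivity), pow_succ _ (M + 1)]
    linarith
  simp only [zigzagFormula, Finset.sum_range_succ _ (M + 1), hlast]
  push_cast
  field_simp
  ring

lemma zigzagFormula_one (M : ℕ) : zigzagFormula 1 M = 0 := by
  induction M with
  | zero => norm_num [zigzagFormula, zigzag_eq_self_of_le_half]
  | succ M ih => rw [zigzagFormula_succ_of_le (Nat.one_le_two_pow), ih]

lemma zigzagFormula_two_mul (m L : ℕ) :
    zigzagFormula (2 * m) (L + 1) = m + 2 * zigzagFormula m L := by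
  have hterm : ∀ k, (2 : ℚ) ^ (k + 1) * Zigzag (((2 * m : ℕ) : ℚ) / 2 ^ (k + 1 + 1))
      = 2 * (2 ^ k * Zigzag ((m : ℚ) / 2 ^ (k + 1))) := fun k => by
    rw [show ((2 * m : ℕ) : ℚ) / 2 ^ (k + 1 + 1) = m / 2 ^ (k + 1) by push_cast; ring]
    ring
  have hfirst : Zigzag (((2 * m : ℕ) : ℚ) / 2 ^ (0 + 1)) = 0 := by
    simp [Zigzag]
  simp only [zigzagFormula, Finset.sum_range_succ' _ (L + 1), hterm, hfirst, ← Finset.mul_sum]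
  push_cast
  ring

lemma zigzagFormula_two_mul_add_one (m L : ℕ) :
    zigzagFormula (2 * m + 1) (L + 1) = m + zigzagFormula m L + zigzagFormula (m + 1) L := by
  have hterm : ∀ k, (2 : ℚ) ^ (k + 1) * Zigzag (((2 * m + 1 : ℕ) : ℚ) / 2 ^ (k + 1 + 1))
      = 2 ^ k * Zigzag ((m : ℚ) / 2 ^ (k + 1))
        + 2 ^ k * Zigzag (((m + 1 : ℕ) : ℚ) / 2 ^ (k + 1)) := by
    intro k
    have := zigzag_two_mul_midpoint m (d := 2 ^ (k + 1))
      ((Nat.even_pow' k.succ_ne_zero).mpr even_two) (by positivity)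
    simp only [Int.cast_natCast, Nat.cast_pow, Nat.cast_ofNat] at this
    rw [show ((2 * m + 1 : ℕ) : ℚ) / 2 ^ (k + 1 + 1) = (2 * m + 1) / (2 * 2 ^ (k + 1)) by
      push_cast; ring]
    push_cast
    linear_combination (2 : ℚ) ^ k * this
  have hfirst : Zigzag (((2 * m + 1 : ℕ) : ℚ) / 2 ^ (0 + 1)) = 1 / 2 := by
    rw [show ((2 * m + 1 : ℕ) : ℚ) / 2 ^ (0 + 1) = 1 / 2 + (m : ℤ) by push_cast; ring,
      zigzag_add_intCast, zigzag_eq_self_of_le_half (by norm_num) le_rfl]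
  simp only [zigzagFormula, Finset.sum_range_succ' _ (L + 1), hterm, hfirst,
    Finset.sum_add_distrib]
  push_cast
  ring

theorem eq_zigzagFormula_of_recurrence (T : ℕ → ℚ) (h1 : T 1 = 0)
    (heven : ∀ m, 0 < m → T (2 * m) = m + 2 * T m)
    (hodd : ∀ m, 0 < m → T (2 * m + 1) = m + T m + T (m + 1)) :
    ∀ n, 0 < n → ∀ M, n ≤ 2 ^ M → T n = zigzagFormula n M := by
  intro n
  induction n using Nat.strong_induction_on with
  | _ n ih =>
    intro hn M hM
    rcases (show n = 1 ∨ 2 ≤ n by omega) with rfl | hn2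
    · rw [h1, zigzagFormula_one]
    obtain ⟨L, rfl⟩ : ∃ L, M = L + 1 :=
      Nat.exists_eq_add_one.mpr (Nat.pos_of_ne_zero (by rintro rfl; simp at hM; omega))
    rw [pow_succ] at hM
    obtain ⟨m, rfl | rfl⟩ := Nat.even_or_odd' n
    · rw [heven m (by omega), zigzagFormula_two_mul, ih m (by omega) (by omega) L (by omega)]
    · rw [hodd m (by omega), zigzagFormula_two_mul_add_one,
        ih m (by omega) (by omega) L (by omega), ih (m + 1) (by omega) (by omega) L (by omega)]

theorem bestCase_formula_general (B : ℕ → ℕ) (hB1 : B 1 = 0)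
    (hB : ∀ n, 2 ≤ n → B n = n / 2 + B (n / 2) + B ((⌈(n : ℚ) / 2⌉).toNat)) :
    ∀ n : ℕ, 0 < n →
      (B n : ℚ) = (n : ℚ) / 2 * (Nat.log 2 n + 1)
        - ∑ k ∈ Finset.range (Nat.log 2 n + 1),
            2 ^ k * Zigzag ((n : ℚ) / 2 ^ (k + 1)) := by
  have hsplit : ∀ n, 2 ≤ n → B n = n / 2 + B (n / 2) + B ((n + 1) / 2) := fun n hn => by
    rw [hB n hn, Int.toNat_ceil_natCast_div_two]
  have heven : ∀ m, 0 < m → (B (2 * m) : ℚ) = m + 2 * B m := fun m hm => by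
    rw [hsplit _ (by omega), show 2 * m / 2 = m by omega, show (2 * m + 1) / 2 = m by omega]
    push_cast; ring
  have hodd : ∀ m, 0 < m → (B (2 * m + 1) : ℚ) = m + B m + B (m + 1) := fun m hm => by
    rw [hsplit _ (by omega), show (2 * m + 1) / 2 = m by omega,
      show (2 * m + 1 + 1) / 2 = m + 1 by omega]
    push_cast; ring
  intro n hn
  have hpow : n ≤ 2 ^ (Nat.log 2 n + 1) := (Nat.lt_pow_succ_log_self one_lt_two n).le
  rw [eq_zigzagFormula_of_recurrence (B ·) (by simp [hB1]) heven hodd n hn _ hpow,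
    zigzagFormula_succ_of_le hpow]
  rfl

theorem bestCase_formula (B : ℕ → ℕ) (hB0 : B 0 = 0) (hB1 : B 1 = 0)
    (hB : ∀ n, 2 ≤ n → B n = n / 2 + B (n / 2) + B ((⌈(n : ℚ) / 2⌉).toNat)) :
    ∀ n : ℕ, 0 < n →
      (B n : ℚ) = (n : ℚ) / 2 * (Nat.log 2 n + 1)
        - ∑ k ∈ Finset.range (Nat.log 2 n + 1),
            2 ^ k * Zigzag ((n : ℚ) / 2 ^ (k + 1)) :=
  bestCase_formula_general B hB1 hB
end

section
/- Define W(n) = n*ceil(log2 n) - 2^(ceil(log2 n)) + 1 and let B : N -> N satisfy B(1) = 0 and B(n) = floor(n/2) + B(floor(n/2)) + B(ceil(n/2)) for n >= 2. Define F(n) = sum over k from 1 to floor(log2 n) of 2^k * Zigzag(n/2^k). Then for every positive natural number n, 2*B(n) - W(n) = n - 1 - F(n), as an equality of rationals. -/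
def distToMultiple (d m : ℕ) : ℕ := min (m % d) (d - m % d)

theorem natCast_mul_zigzag_div (d m : ℕ) (hd : d ≠ 0) :
    (d : ℚ) * Zigzag ((m : ℚ) / d) = distToMultiple d m := by
  have hd' : (0 : ℚ) < d := by positivity
  have hr : m % d ≤ d := (Nat.mod_lt m (Nat.pos_of_ne_zero hd)).le
  rw [zigzag_eq_min_fract, Int.fract_div_natCast_eq_div_natCast_mod, mul_min_of_nonneg _ _ hd'.le,
    distToMultiple, Nat.cast_min, Nat.cast_sub hr]
  field_simp

theorem distToMultiple_of_eq_mul_add {d m q t : ℕ} (hm : m = d * q + t) (ht : t ≤ d) :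
    distToMultiple d m = min t (d - t) := by
  rcases ht.lt_or_eq with ht | rfl
  · rw [distToMultiple, hm, Nat.mul_add_mod, Nat.mod_eq_of_lt ht]
  · simp [distToMultiple, hm]

theorem distToMultiple_self (d : ℕ) : distToMultiple d d = 0 := by
  simp [distToMultiple]

theorem distToMultiple_two (n : ℕ) : distToMultiple 2 n = n % 2 := by
  unfold distToMultiple
  omega

/-- With `n = 2eq + r` we get `n / 2 = eq + ⌊r/2⌋` and `(n + 1) / 2 = eq + ⌈r/2⌉`; the parity of `e`
makes the two distances add up when `r` is odd and close to `e`. -/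
theorem distToMultiple_two_mul {e : ℕ} (he : Even e) (n : ℕ) :
    distToMultiple (2 * e) n = distToMultiple e (n / 2) + distToMultiple e ((n + 1) / 2) := by
  rcases Nat.eq_zero_or_pos e with rfl | he0
  · simp [distToMultiple]
  obtain ⟨q, r, hr, hn⟩ : ∃ q r, r < 2 * e ∧ n = 2 * e * q + r :=
    ⟨n / (2 * e), n % (2 * e), Nat.mod_lt _ (by omega), (Nat.div_add_mod n _).symm⟩
  have hlo : n / 2 = e * q + r / 2 := by rw [hn, mul_assoc, Nat.mul_add_div two_pos]
  have hhi : (n + 1) / 2 = e * q + (r + 1) / 2 := by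
    rw [hn, mul_assoc, add_assoc, Nat.mul_add_div two_pos]
  rw [distToMultiple_of_eq_mul_add hn hr.le, distToMultiple_of_eq_mul_add hlo (by omega),
    distToMultiple_of_eq_mul_add hhi (by omega)]
  have := Nat.even_iff.mp he
  omega

theorem sum_Icc_one_add_one {M : Type*} [AddCommMonoid M] (f : ℕ → M) (n : ℕ) :
    ∑ k ∈ Finset.Icc 1 (n + 1), f k = f 1 + ∑ k ∈ Finset.Icc 1 n, f (k + 1) := by
  rw [← Finset.insert_Icc_add_one_left_eq_Icc (by omega), Finset.sum_insert (by simp),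
    ← Finset.map_add_right_Icc, Finset.sum_map]
  rfl

def zigzagSum (n : ℕ) : ℕ := ∑ k ∈ Finset.Icc 1 (Nat.log 2 n), distToMultiple (2 ^ k) n

theorem natCast_zigzagSum (n : ℕ) :
    (zigzagSum n : ℚ) =
      ∑ k ∈ Finset.Icc 1 (Nat.log 2 n), (2 : ℚ) ^ k * Zigzag ((n : ℚ) / 2 ^ k) := by
  rw [zigzagSum, Nat.cast_sum]
  refine Finset.sum_congr rfl fun k _ => ?_
  rw [← natCast_mul_zigzag_div _ _ (by positivity)]
  push_cast
  rfl

/-- If `m = 2 ^ (M + 1)`, the extra term `k = M + 1` of `zigzagSum m` vanishes. -/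
theorem zigzagSum_eq_sum_Icc {M m : ℕ} (hlo : 2 ^ M ≤ m) (hhi : m ≤ 2 ^ (M + 1)) :
    zigzagSum m = ∑ k ∈ Finset.Icc 1 M, distToMultiple (2 ^ k) m := by
  rcases hhi.lt_or_eq with hhi | rfl
  · rw [zigzagSum, Nat.log_eq_of_pow_le_of_lt_pow hlo hhi]
  · rw [zigzagSum, Nat.log_pow one_lt_two, Finset.sum_Icc_succ_top (by omega), distToMultiple_self,
      add_zero]

theorem zigzagSum_rec {n : ℕ} (hn : 2 ≤ n) :
    zigzagSum n = n % 2 + zigzagSum (n / 2) + zigzagSum ((n + 1) / 2) := by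
  obtain ⟨M, hM⟩ : ∃ M, Nat.log 2 n = M + 1 :=
    ⟨Nat.log 2 n - 1, by have := Nat.log_pos one_lt_two hn; omega⟩
  have hlo : 2 ^ (M + 1) ≤ n := hM ▸ Nat.pow_log_le_self 2 (by omega)
  have hhi : n < 2 ^ (M + 1 + 1) := hM ▸ Nat.lt_pow_succ_log_self one_lt_two n
  rw [pow_succ] at hlo
  rw [pow_succ, pow_succ] at hhi
  rw [zigzagSum_eq_sum_Icc (m := n / 2) (M := M) (by omega) (by omega),
    zigzagSum_eq_sum_Icc (m := (n + 1) / 2) (M := M) (by omega) (by omega),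
    add_assoc, ← Finset.sum_add_distrib, zigzagSum, hM, sum_Icc_one_add_one, pow_one,
    distToMultiple_two]
  congr 1
  refine Finset.sum_congr rfl fun k hk => ?_
  have hk0 : k ≠ 0 := Nat.one_le_iff_ne_zero.mp (Finset.mem_Icc.mp hk).1
  rw [pow_succ', distToMultiple_two_mul ((Nat.even_pow' hk0).mpr even_two)]

def worstCost (c m : ℕ) : ℚ := m * c - 2 ^ c + 1

/-- Besides `Nat.clog 2 m`, the only `c` allowed here is `c - 1` when `m = 2 ^ (c - 1)`, which
gives the same value. -/
theorem worstCost_clog {m c : ℕ} (hlo : m ≤ 2 ^ c) (hhi : 2 ^ c ≤ 2 * m) :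
    worstCost (Nat.clog 2 m) m = worstCost c m := by
  cases c with
  | zero =>
    obtain rfl : m = 1 := by omega
    simp [worstCost]
  | succ d =>
    rw [pow_succ] at hhi
    rcases (show 2 ^ d ≤ m by omega).lt_or_eq with h | rfl
    · rw [le_antisymm (Nat.clog_le_of_le_pow hlo) ((Nat.lt_clog_iff_pow_lt one_lt_two).mpr h)]
    · rw [Nat.clog_pow _ _ one_lt_two, worstCost, worstCost]
      push_cast
      ring

theorem worstCost_clog_rec {n : ℕ} (hn : 2 ≤ n) :
    worstCost (Nat.clog 2 n) n = worstCost (Nat.clog 2 (n / 2)) (n / 2)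
      + worstCost (Nat.clog 2 ((n + 1) / 2)) ((n + 1) / 2) + (n - 1) := by
  obtain ⟨d, hd⟩ : ∃ d, Nat.clog 2 n = d + 1 :=
    ⟨Nat.clog 2 n - 1, by have := Nat.clog_pos one_lt_two hn; omega⟩
  have hlo : 2 ^ d < n := by simpa [hd] using Nat.pow_pred_clog_lt_self one_lt_two hn
  have hhi : n ≤ 2 ^ (d + 1) := hd ▸ Nat.le_pow_clog one_lt_two n
  rw [pow_succ] at hhi
  rw [worstCost_clog (m := n / 2) (c := d) (by omega) (by omega),
    worstCost_clog (m := (n + 1) / 2) (c := d) (by omega) (by omega),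
    hd, worstCost, worstCost, worstCost]
  have hsum : ((n / 2 : ℕ) : ℚ) + ((n + 1) / 2 : ℕ) = n := by norm_cast; omega
  push_cast
  linear_combination (-(d : ℚ)) * hsum

theorem toNat_ceil_half (n : ℕ) : (⌈(n : ℚ) / 2⌉).toNat = (n + 1) / 2 := by
  have := Rat.ceil_natCast_div_natCast n 2
  push_cast at this
  rw [this]
  omega

theorem twoB_sub_W (B : ℕ → ℕ) (hB1 : B 1 = 0)
    (hB : ∀ n, 2 ≤ n → B n = n / 2 + B (n / 2) + B ((⌈(n : ℚ) / 2⌉).toNat))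
    (W : ℕ → ℚ) (hW : ∀ n, W n = (n : ℚ) * Nat.clog 2 n - 2 ^ Nat.clog 2 n + 1)
    (F : ℕ → ℚ)
    (hF : ∀ n, F n = ∑ k ∈ Finset.Icc 1 (Nat.log 2 n),
        (2 : ℚ) ^ k * Zigzag ((n : ℚ) / 2 ^ k)) :
    ∀ n : ℕ, 0 < n → 2 * (B n : ℚ) - W n = (n : ℚ) - 1 - F n := by
  have hW' (m : ℕ) : W m = worstCost (Nat.clog 2 m) m := hW m
  have hF' (m : ℕ) : F m = zigzagSum m := by rw [hF, natCast_zigzagSum]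
  intro n
  induction n using Nat.strong_induction_on with
  | _ n ih =>
    intro hn
    rcases (show n = 1 ∨ 2 ≤ n by omega) with rfl | hn2
    · simp [hB1, hW, hF]
    have hBn : (B n : ℚ) = (n / 2 : ℕ) + B (n / 2) + B ((n + 1) / 2) := by
      rw [hB n hn2, toNat_ceil_half]
      push_cast
      rfl
    have hFn : (zigzagSum n : ℚ) = (n % 2 : ℕ) + zigzagSum (n / 2) + zigzagSum ((n + 1) / 2) := by
      rw [zigzagSum_rec hn2]
      push_cast
      rfl
    have hlo := ih (n / 2) (by omega) (by omega)
    have hhi := ih ((n + 1) / 2) (by omega) (by omega)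
    have hdiv : ((n / 2 : ℕ) : ℚ) * 2 + (n % 2 : ℕ) = n := by norm_cast; omega
    have hsum : ((n / 2 : ℕ) : ℚ) + ((n + 1) / 2 : ℕ) = n := by norm_cast; omega
    rw [hW', hF'] at hlo hhi ⊢
    rw [hBn, worstCost_clog_rec hn2, hFn]
    linear_combination hlo + hhi + hdiv + hsum
end
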